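/- Let n ≥ 2, T > 0. Let B : [0,T] → ℝ^{n×n} be continuous with B(t) null negative-definite for all t ∈ [0,T], and let L : [0,T] → ℝ^{n×n} be continuous with each L(t) Minkowski-symmetric. Suppose there is t₀ ∈ (0,T] such that −L(t) is null negative-definite for all t ∈ (0,t₀) and −L(t₀) is not null negative-definite. Then −L(t₀) is null negative semi-definite, and there exist a nonzero null vector x₀ ∈ ℝⁿ and λ ∈ ℝ with L(t₀) x₀ = λ x₀ and ⟨L(t₀) x₀, x₀⟩ = 0. -/

import Mathlib

open Matrix Set

noncomputable section

def mink {n : ℕ} (v w : Fin n → ℝ) : ℝ :=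
  ∑ j : Fin n, (if (j : ℕ) = 0 then -(v j * w j) else v j * w j)

def IsNull {n : ℕ} (v : Fin n → ℝ) : Prop := mink v v = 0

def MinkSymm {n : ℕ} (L : Matrix (Fin n) (Fin n) ℝ) : Prop :=
  ∀ v w : Fin n → ℝ, mink (L.mulVec v) w = mink v (L.mulVec w)

def NullNegDef {n : ℕ} (L : Matrix (Fin n) (Fin n) ℝ) : Prop :=
  ∀ v : Fin n → ℝ, v ≠ 0 → IsNull v → mink (L.mulVec v) v < 0

def NullNegSemi {n : ℕ} (L : Matrix (Fin n) (Fin n) ℝ) : Prop :=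
  ∀ v : Fin n → ℝ, IsNull v → mink (L.mulVec v) v ≤ 0

def matDerivWithin {n : ℕ} (L : ℝ → Matrix (Fin n) (Fin n) ℝ) (s : Set ℝ) (t : ℝ) :
    Matrix (Fin n) (Fin n) ℝ :=
  Matrix.of fun i j => derivWithin (fun u => L u i j) s t

/-! At a nonzero null `x₀` with `⟨L(t₀)x₀, x₀⟩ = 0`, semi-definiteness (a closed condition, inherited
from `(0, t₀)`) makes `x₀` an extremum of `v ↦ ⟨L(t₀)v, v⟩` on the null cone. The Lagrange multiplier
rule gives `a⟨x₀, w⟩ + b⟨L(t₀)x₀, w⟩ = 0` for all `w`, using Minkowski symmetry to compute the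
derivative, and nondegeneracy of the form turns this into `L(t₀)x₀ ∈ ℝx₀`. -/

theorem exists_eq_smul_of_isLocalExtrOn_levelSet {E : Type*} [NormedAddCommGroup E]
    [NormedSpace ℝ E] [CompleteSpace E] (β : E →L[ℝ] E →L[ℝ] ℝ)
    (A : E →L[ℝ] E) (hβ : ∀ v w, β v w = β w v)
    (hnd : ∀ v, (∀ w, β v w = 0) → v = 0) (hA : ∀ v w, β (A v) w = β v (A w)) {x : E} (hx : x ≠ 0)
    (hextr : IsLocalExtrOn (fun v => β (A v) v) {v | β v v = β x x} x) :
    ∃ lam : ℝ, A x = lam • x := by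
  obtain ⟨a, b, hab, hlag⟩ := hextr.exists_multipliers_of_hasStrictFDerivAt_1d
    (β.hasStrictFDerivAt_of_bilinear (hasStrictFDerivAt_id x) (hasStrictFDerivAt_id x))
    (β.hasStrictFDerivAt_of_bilinear A.hasStrictFDerivAt (hasStrictFDerivAt_id x))
  have hcomb : a • x + b • A x = 0 := by
    refine hnd _ fun w => ?_
    have hw := congrArg (fun f : E →L[ℝ] ℝ => f w) hlag
    simp only [ContinuousLinearMap.precompR_apply, ContinuousLinearMap.compL_apply,
      ContinuousLinearMap.comp_id, ContinuousLinearMap.precompL_apply,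
      ContinuousLinearMap.id_apply, smul_add, _root_.add_apply, _root_.smul_apply, smul_eq_mul,
      _root_.zero_apply] at hw
    rw [hβ w x, hA w x, hβ w (A x)] at hw
    simp only [map_add, map_smul, _root_.add_apply, _root_.smul_apply, smul_eq_mul]
    linarith
  have hb : b ≠ 0 := by
    rintro rfl
    rw [zero_smul, add_zero, smul_eq_zero] at hcomb
    exact hcomb.elim (fun ha => hab (by rw [ha]; rfl)) hx
  refine ⟨-a / b, ?_⟩
  rw [div_eq_inv_mul, mul_smul, neg_smul, ← eq_neg_of_add_eq_zero_right hcomb, inv_smul_smul₀ hb]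

def minkowskiMetric (n : ℕ) : Matrix (Fin n) (Fin n) ℝ :=
  diagonal fun j => if (j : ℕ) = 0 then -1 else 1

section Minkowski

variable {n : ℕ}

theorem mink_eq_dotProduct_mulVec (v w : Fin n → ℝ) :
    mink v w = v ⬝ᵥ (minkowskiMetric n *ᵥ w) := by
  simp only [mink, minkowskiMetric, mulVec_diagonal, dotProduct]
  exact Finset.sum_congr rfl fun j _ => by split_ifs <;> ring

theorem minkowskiMetric_mul_self : minkowskiMetric n * minkowskiMetric n = 1 := by
  rw [minkowskiMetric, diagonal_mul_diagonal, ← diagonal_one]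
  congr 1
  funext j
  split_ifs <;> norm_num

theorem mink_comm (v w : Fin n → ℝ) : mink v w = mink w v := by
  rw [mink_eq_dotProduct_mulVec, mink_eq_dotProduct_mulVec, dotProduct_mulVec,
    ← mulVec_transpose, minkowskiMetric, diagonal_transpose, dotProduct_comm]

theorem eq_zero_of_forall_mink_eq_zero {v : Fin n → ℝ} (h : ∀ w, mink v w = 0) : v = 0 := by
  have hv := h (minkowskiMetric n *ᵥ v)
  rwa [mink_eq_dotProduct_mulVec, mulVec_mulVec, minkowskiMetric_mul_self, one_mulVec,
    dotProduct_self_eq_zero] at hv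

theorem mink_neg_left (v w : Fin n → ℝ) : mink (-v) w = -mink v w := by
  simp only [mink_eq_dotProduct_mulVec, neg_dotProduct]

def minkCLM (n : ℕ) : (Fin n → ℝ) →L[ℝ] (Fin n → ℝ) →L[ℝ] ℝ :=
  (toLinearMap₂' ℝ (minkowskiMetric n)).toContinuousBilinearMap

theorem minkCLM_apply (v w : Fin n → ℝ) : minkCLM n v w = mink v w := by
  rw [mink_eq_dotProduct_mulVec, ← toLinearMap₂'_apply']
  rfl

theorem MinkSymm.neg {M : Matrix (Fin n) (Fin n) ℝ} (h : MinkSymm M) : MinkSymm (-M) := by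
  intro v w
  rw [neg_mulVec, neg_mulVec, mink_neg_left, mink_comm v, mink_neg_left, h, mink_comm]

theorem NullNegDef.nullNegSemi {M : Matrix (Fin n) (Fin n) ℝ} (h : NullNegDef M) :
    NullNegSemi M := by
  intro v hv
  rcases eq_or_ne v 0 with rfl | hv0
  · simp [mink]
  · exact (h v hv0 hv).le

theorem isClosed_setOf_nullNegSemi : IsClosed {M : Matrix (Fin n) (Fin n) ℝ | NullNegSemi M} := by
  simp only [NullNegSemi, ofPred_forall]
  refine isClosed_iInter fun v => isClosed_iInter fun _ => isClosed_le ?_ continuous_const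
  simp only [mink_eq_dotProduct_mulVec]
  fun_prop

theorem NullNegSemi.exists_null_eigenvector {M : Matrix (Fin n) (Fin n) ℝ} (hsymm : MinkSymm M)
    (hsemi : NullNegSemi M) (hnot : ¬ NullNegDef M) :
    ∃ (x : Fin n → ℝ) (lam : ℝ), x ≠ 0 ∧ IsNull x ∧ M *ᵥ x = lam • x ∧ mink (M *ᵥ x) x = 0 := by
  simp only [NullNegDef, not_forall, not_lt] at hnot
  obtain ⟨x, hx0, hxnull, hxq⟩ := hnot
  have hxq : mink (M *ᵥ x) x = 0 := le_antisymm (hsemi x hxnull) hxq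
  have hmax : IsMaxOn (fun v => mink (M *ᵥ v) v) {v | mink v v = mink x x} x := fun v hv =>
    (hsemi v (hv.trans hxnull)).trans hxq.ge
  set A := LinearMap.toContinuousLinearMap (toLin' M)
  have hA : ∀ v, A v = M *ᵥ v := fun v => rfl
  obtain ⟨lam, hlam⟩ := exists_eq_smul_of_isLocalExtrOn_levelSet (minkCLM n) A
    (fun v w => by simp only [minkCLM_apply, mink_comm])
    (fun v hv => eq_zero_of_forall_mink_eq_zero fun w => by simpa only [minkCLM_apply] using hv w)
    (fun v w => by simp only [minkCLM_apply, hA, hsymm v w]) hx0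
    (by simpa only [minkCLM_apply, hA] using hmax.isExtr.localize)
  exact ⟨x, lam, hx0, hxnull, hlam, hxq⟩

end Minkowski

theorem stmt_9_general {n : ℕ} (T : ℝ)
    (L : ℝ → Matrix (Fin n) (Fin n) ℝ)
    (hLcont : ∀ i j, ContinuousOn (fun t => L t i j) (Set.Icc 0 T))
    (hLsymm : ∀ t ∈ Set.Icc (0 : ℝ) T, MinkSymm (L t))
    (t₀ : ℝ) (ht₀ : t₀ ∈ Set.Ioc 0 T)
    (hdef : ∀ t ∈ Set.Ioo (0 : ℝ) t₀, NullNegDef (-(L t)))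
    (hnotdef : ¬ NullNegDef (-(L t₀))) :
    NullNegSemi (-(L t₀)) ∧
      ∃ (x₀ : Fin n → ℝ) (lam : ℝ), x₀ ≠ 0 ∧ IsNull x₀ ∧
        (L t₀).mulVec x₀ = lam • x₀ ∧ mink ((L t₀).mulVec x₀) x₀ = 0 := by
  obtain ⟨ht₀pos, ht₀T⟩ := ht₀
  have ht₀mem : t₀ ∈ Icc 0 T := ⟨ht₀pos.le, ht₀T⟩
  have hL : ContinuousWithinAt L (Ioo 0 t₀) t₀ :=
    ((continuousOn_pi.2 fun i => continuousOn_pi.2 (hLcont i)).continuousWithinAt ht₀mem).mono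
      fun t ht => ⟨ht.1.le, ht.2.le.trans ht₀T⟩
  have := right_nhdsWithin_Ioo_neBot ht₀pos
  have hsemi : NullNegSemi (-(L t₀)) := isClosed_setOf_nullNegSemi.mem_of_tendsto hL.neg
    (eventually_nhdsWithin_of_forall fun t ht => (hdef t ht).nullNegSemi)
  obtain ⟨x, lam, hx0, hxnull, hxeig, hxq⟩ :=
    hsemi.exists_null_eigenvector (hLsymm t₀ ht₀mem).neg hnotdef
  rw [neg_mulVec, neg_eq_iff_eq_neg, ← neg_smul] at hxeig
  rw [neg_mulVec, mink_neg_left, neg_eq_zero] at hxq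
  exact ⟨hsemi, x, -lam, hx0, hxnull, hxeig, hxq⟩

/-- if `-L(t)` is null negative-definite on `(0,t₀)` but not at `t₀`,
then by continuity `-L(t₀)` is null negative semi-definite and `L(t₀)` has a nonzero
null eigenvector `x₀` with `⟨L(t₀)x₀,x₀⟩ = 0`. -/
theorem stmt_9 {n : ℕ} (hn : 2 ≤ n) (T : ℝ) (hT : 0 < T)
    (B L : ℝ → Matrix (Fin n) (Fin n) ℝ)
    (hBcont : ∀ i j, ContinuousOn (fun t => B t i j) (Set.Icc 0 T))
    (hBdef : ∀ t ∈ Set.Icc (0 : ℝ) T, NullNegDef (B t))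
    (hLcont : ∀ i j, ContinuousOn (fun t => L t i j) (Set.Icc 0 T))
    (hLsymm : ∀ t ∈ Set.Icc (0 : ℝ) T, MinkSymm (L t))
    (t₀ : ℝ) (ht₀ : t₀ ∈ Set.Ioc 0 T)
    (hdef : ∀ t ∈ Set.Ioo (0 : ℝ) t₀, NullNegDef (-(L t)))
    (hnotdef : ¬ NullNegDef (-(L t₀))) :
    NullNegSemi (-(L t₀)) ∧
      ∃ (x₀ : Fin n → ℝ) (lam : ℝ), x₀ ≠ 0 ∧ IsNull x₀ ∧
        (L t₀).mulVec x₀ = lam • x₀ ∧ mink ((L t₀).mulVec x₀) x₀ = 0 :=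
  stmt_9_general T L hLcont hLsymm t₀ ht₀ hdef hnotdef
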